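/- arXiv:2511.15867 — 2 statements merged into one kernel-verified Lean document; each statement's English description precedes it below -/
import Mathlib

section
/- Let A be a unital C*-algebra in which all projections commute and which has no minimal projections. Then for every finite list of nonzero, non-identity projections p_0,…,p_{n−1} in A, there exists a projection q with 0 ≠ q ≠ 1 such that for every i < n, both p_i q ≠ 0 and p_i (1 − q) ≠ 0. -/
/-- `p` is a projection: a self-adjoint idempotent. -/
def IsProjection {A : Type*} [Ring A] [StarRing A] (p : A) : Prop :=
  star p = p ∧ p * p = p

lemma aux_sum_one {R : Type*} [CommRing R] (n : ℕ) (g : Fin n → R) :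
    ∑ σ : Fin n → Bool, ∏ i, (cond (σ i) (1 - g i) (g i)) = 1 := by
  have h := Finset.prod_univ_sum (fun _ : Fin n => (Finset.univ : Finset Bool))
      (fun i b => cond b (1 - g i) (g i))
  rw [Fintype.piFinset_univ] at h
  rw [← h]
  have h2 : ∀ i : Fin n, (∑ b : Bool, cond b (1 - g i) (g i)) = 1 := by
    intro i; simp
  simp [h2]

lemma aux_absorb {R : Type*} [CommRing R] {n : ℕ} (g : Fin n → R)
    (hg : ∀ i, g i * g i = g i) (σ : Fin n → Bool) (i : Fin n) :
    g i * ∏ j, (cond (σ j) (1 - g j) (g j)) =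
      cond (σ i) 0 (∏ j, (cond (σ j) (1 - g j) (g j))) := by
  rw [← Finset.mul_prod_erase Finset.univ _ (Finset.mem_univ i), ← mul_assoc]
  cases h : σ i with
  | false => simp only [h, cond_false]; rw [hg i]
  | true => simp only [h, cond_true]; rw [mul_one_sub, hg i, sub_self, zero_mul]

lemma aux_idem {R : Type*} [CommRing R] {n : ℕ} (g : Fin n → R)
    (hg : ∀ i, g i * g i = g i) (σ : Fin n → Bool) :
    (∏ j, (cond (σ j) (1 - g j) (g j))) * (∏ j, (cond (σ j) (1 - g j) (g j)))
      = ∏ j, (cond (σ j) (1 - g j) (g j)) := by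
  rw [← Finset.prod_mul_distrib]
  refine Finset.prod_congr rfl fun i _ => ?_
  cases h : σ i with
  | false => simp only [cond_false]; exact hg i
  | true => simp only [cond_true]; linear_combination hg i

/-- In a unital C*-algebra in which all projections commute and which
has no minimal projections, every finite list of nonzero, non-identity projections can be
simultaneously split by a single projection `q` with `0 ≠ q ≠ 1`. -/
theorem stmt9 {A : Type*} [NormedRing A] [StarRing A] [CStarRing A]
    [NormedAlgebra ℂ A] [CompleteSpace A] [StarModule ℂ A] [Nontrivial A]
    (hcomm : ∀ p q : A, IsProjection p → IsProjection q → p * q = q * p)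
    (hnomin : ∀ p : A, IsProjection p → p ≠ 0 →
        ∃ q : A, IsProjection q ∧ q ≠ 0 ∧ q ≠ p ∧ q * p = q)
    (n : ℕ) (p : Fin n → A)
    (hp : ∀ i, IsProjection (p i) ∧ p i ≠ 0 ∧ p i ≠ 1) :
    ∃ q : A, IsProjection q ∧ q ≠ 0 ∧ q ≠ 1 ∧
      ∀ i, p i * q ≠ 0 ∧ p i * (1 - q) ≠ 0 := by
  classical
  have hcs : ∀ x ∈ Set.range p, ∀ y ∈ Set.range p, x * y = y * x := by
    rintro x ⟨i, rfl⟩ y ⟨j, rfl⟩; exact hcomm _ _ (hp i).1 (hp j).1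
  letI : CommRing (Subring.closure (Set.range p)) := Subring.closureCommRingOfComm hcs
  have hmem : ∀ i, p i ∈ Subring.closure (Set.range p) :=
    fun i => Subring.subset_closure ⟨i, rfl⟩
  have hccl : ∀ a b : A, a ∈ Subring.closure (Set.range p) →
      b ∈ Subring.closure (Set.range p) → a * b = b * a :=
    fun a b ha hb =>
      congrArg Subtype.val (mul_comm (⟨a, ha⟩ : Subring.closure (Set.range p)) ⟨b, hb⟩)
  set g : Fin n → Subring.closure (Set.range p) := fun i => ⟨p i, hmem i⟩ with hgdef
  have hgid : ∀ i, g i * g i = g i := fun i => Subtype.ext (hp i).1.2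
  set P' : (Fin n → Bool) → Subring.closure (Set.range p) :=
    fun σ => ∏ i, (cond (σ i) (1 - g i) (g i)) with hP'def
  set P : (Fin n → Bool) → A := fun σ => (P' σ : A) with hPdef
  have hPmem : ∀ σ, P σ ∈ Subring.closure (Set.range p) := fun σ => (P' σ).2
  -- sum is one
  have hsum1 : ∑ σ : Fin n → Bool, P σ = 1 := by
    have h := congrArg (Subtype.val) (aux_sum_one n g)
    rw [AddSubmonoidClass.coe_finset_sum] at h
    exact h
  -- absorption
  have habs : ∀ σ i, p i * P σ = cond (σ i) 0 (P σ) := by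
    intro σ i
    have h := congrArg (Subtype.val) (aux_absorb g hgid σ i)
    rw [MulMemClass.coe_mul] at h
    cases hb : σ i with
    | true =>
      rw [hb, cond_true] at h
      rw [cond_true]
      exact h.trans (ZeroMemClass.coe_zero _)
    | false =>
      rw [hb, cond_false] at h
      rw [cond_false]
      exact h
  have hPidem : ∀ σ, P σ * P σ = P σ := by
    intro σ
    have h := congrArg (Subtype.val) (aux_idem g hgid σ)
    rw [MulMemClass.coe_mul] at h
    exact h
  -- the coerced factors
  have hfproj : ∀ (σ : Fin n → Bool) (i : Fin n),
      star ((cond (σ i) (1 - g i) (g i) : Subring.closure (Set.range p)) : A) =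
        ((cond (σ i) (1 - g i) (g i) : Subring.closure (Set.range p)) : A) := by
    intro σ i
    cases hb : σ i with
    | false => exact (hp i).1.1
    | true =>
      simp only [cond_true]
      push_cast
      rw [star_sub, star_one, (hp i).1.1]
  have hstarP : ∀ σ, star (P σ) = P σ := by
    intro σ
    have key : ∀ t : Finset (Fin n),
        star ((↑(∏ i ∈ t, (cond (σ i) (1 - g i) (g i))) : A)) =
          (↑(∏ i ∈ t, (cond (σ i) (1 - g i) (g i))) : A) := by
      intro t
      induction t using Finset.induction with
      | empty => simp
      | @insert a t' hx ih =>
        rw [Finset.prod_insert hx, MulMemClass.coe_mul, star_mul, ih, hfproj σ a,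
          hccl _ _ (∏ i ∈ t', (cond (σ i) (1 - g i) (g i))).2
            (cond (σ a) (1 - g a) (g a)).2]
    exact key Finset.univ
  have hPproj : ∀ σ, IsProjection (P σ) := fun σ => ⟨hstarP σ, hPidem σ⟩
  -- orthogonality of the P's
  have habs' : ∀ σ i, (1 - p i) * P σ = cond (σ i) (P σ) 0 := by
    intro σ i
    rw [sub_mul, one_mul, habs]
    cases h : σ i <;> simp [h]
  have hPcomm : ∀ σ i, P σ * p i = p i * P σ := fun σ i =>
    hccl _ _ (hPmem σ) (hmem i)
  have hPorth : ∀ σ τ, σ ≠ τ → P σ * P τ = 0 := by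
    intro σ τ hne
    obtain ⟨i, hi⟩ : ∃ i, σ i ≠ τ i := by
      by_contra h; push_neg at h; exact hne (funext h)
    have h10 : p i * (1 - p i) = 0 := by
      rw [mul_one_sub, (hp i).1.2, sub_self]
    cases hσ : σ i with
    | true =>
      have hτ : τ i = false := by
        cases h : τ i
        · rfl
        · exact absurd (by rw [hσ, h]) hi
      have h1 : (1 - p i) * P σ = P σ := by rw [habs', hσ, cond_true]
      have h2 : p i * P τ = P τ := by rw [habs, hτ, cond_false]
      calc P σ * P τ = ((1 - p i) * P σ) * (p i * P τ) := by rw [h1, h2]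
        _ = (1 - p i) * ((P σ * p i) * P τ) := by simp only [mul_assoc]
        _ = (1 - p i) * ((p i * P σ) * P τ) := by rw [hPcomm]
        _ = ((1 - p i) * p i) * (P σ * P τ) := by simp only [mul_assoc]
        _ = 0 := by
            rw [hccl _ _ (Subring.sub_mem _ (Subring.one_mem _) (hmem i)) (hmem i), h10,
              zero_mul]
    | false =>
      have hτ : τ i = true := by
        cases h : τ i
        · exact absurd (by rw [hσ, h]) hi
        · rfl
      have h1 : p i * P σ = P σ := by rw [habs, hσ, cond_false]
      have h2 : (1 - p i) * P τ = P τ := by rw [habs', hτ, cond_true]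
      calc P σ * P τ = (p i * P σ) * ((1 - p i) * P τ) := by rw [h1, h2]
        _ = p i * ((P σ * (1 - p i)) * P τ) := by simp only [mul_assoc]
        _ = p i * (((1 - p i) * P σ) * P τ) := by
            rw [hccl _ _ (hPmem σ) (Subring.sub_mem _ (Subring.one_mem _) (hmem i))]
        _ = (p i * (1 - p i)) * (P σ * P τ) := by simp only [mul_assoc]
        _ = 0 := by rw [h10, zero_mul]
  -- choose the splittings
  have hrex : ∀ σ : Fin n → Bool, ∃ r : A, IsProjection r ∧ r * P σ = r ∧ P σ * r = r ∧
      (P σ ≠ 0 → r ≠ 0 ∧ r ≠ P σ) := by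
    intro σ
    by_cases h : P σ = 0
    · exact ⟨0, ⟨star_zero _, mul_zero 0⟩, zero_mul _, mul_zero _, fun h' => absurd h h'⟩
    · obtain ⟨r, hr1, hr2, hr3, hr4⟩ := hnomin (P σ) (hPproj σ) h
      refine ⟨r, hr1, hr4, ?_, fun _ => ⟨hr2, hr3⟩⟩
      rw [hcomm _ _ (hPproj σ) hr1]; exact hr4
  choose r hrproj hrP hPr hrne using hrex
  have hrPo : ∀ σ τ, σ ≠ τ → r σ * P τ = 0 := by
    intro σ τ hne
    conv_lhs => rw [← hrP σ]
    rw [mul_assoc, hPorth σ τ hne, mul_zero]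
  have hrorth : ∀ σ τ, σ ≠ τ → r σ * r τ = 0 := by
    intro σ τ hne
    conv_lhs => rw [← hPr τ]
    rw [← mul_assoc, hrPo σ τ hne, zero_mul]
  set q : A := ∑ σ : Fin n → Bool, r σ with hqdef
  have hqproj : IsProjection q := by
    constructor
    · rw [hqdef, star_sum]
      exact Finset.sum_congr rfl fun σ _ => (hrproj σ).1
    · rw [hqdef, Finset.sum_mul]
      refine Finset.sum_congr rfl fun σ _ => ?_
      rw [Finset.mul_sum]
      rw [Finset.sum_eq_single σ]
      · exact (hrproj σ).2
      · intro τ _ hτ; exact hrorth σ τ (fun h => hτ h.symm)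
      · intro h; exact absurd (Finset.mem_univ σ) h
  have hqr : ∀ σ, q * r σ = r σ := by
    intro σ
    rw [hqdef, Finset.sum_mul, Finset.sum_eq_single σ]
    · exact (hrproj σ).2
    · intro τ _ hτ; exact hrorth τ σ hτ
    · intro h; exact absurd (Finset.mem_univ σ) h
  have hqP : ∀ σ, q * P σ = r σ := by
    intro σ
    rw [hqdef, Finset.sum_mul, Finset.sum_eq_single σ]
    · exact hrP σ
    · intro τ _ hτ; exact hrPo τ σ hτ
    · intro h; exact absurd (Finset.mem_univ σ) h
  have hqsub : ∀ σ, q * (P σ - r σ) = 0 := by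
    intro σ; rw [mul_sub, hqP, hqr, sub_self]
  obtain ⟨σ0, hσ0⟩ : ∃ σ, P σ ≠ 0 := by
    by_contra h; push_neg at h
    have : (1 : A) = 0 := by rw [← hsum1]; exact Finset.sum_eq_zero fun σ _ => h σ
    exact one_ne_zero this
  refine ⟨q, hqproj, ?_, ?_, ?_⟩
  · intro h
    have := hqr σ0
    rw [h, zero_mul] at this
    exact (hrne σ0 hσ0).1 this.symm
  · intro h
    have := hqsub σ0
    rw [h, one_mul, sub_eq_zero] at this
    exact (hrne σ0 hσ0).2 this.symm
  · intro i
    have hpi : p i = ∑ σ : Fin n → Bool, cond (σ i) 0 (P σ) := by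
      conv_lhs => rw [← mul_one (p i), ← hsum1]
      rw [Finset.mul_sum]
      exact Finset.sum_congr rfl fun σ _ => habs σ i
    obtain ⟨σ1, hσ1i, hPσ1⟩ : ∃ σ : Fin n → Bool, σ i = false ∧ P σ ≠ 0 := by
      by_contra h; push_neg at h
      apply (hp i).2.1
      rw [hpi]
      refine Finset.sum_eq_zero fun σ _ => ?_
      cases hb : σ i with
      | true => simp
      | false => simp [h σ hb]
    have hrσ1 : r σ1 ≠ 0 := (hrne σ1 hPσ1).1
    have hpir : ∀ σ, p i * r σ = cond (σ i) 0 (r σ) := by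
      intro σ
      conv_lhs => rw [← hPr σ, ← mul_assoc]
      rw [habs σ i]
      cases hb : σ i with
      | true => rw [cond_true, cond_true, zero_mul]
      | false => rw [cond_false, cond_false, hPr σ]
    constructor
    · intro h
      have hkey : (p i * q) * r σ1 = r σ1 := by
        rw [hqdef, Finset.mul_sum, Finset.sum_mul, Finset.sum_eq_single σ1]
        · rw [hpir σ1, hσ1i, cond_false, (hrproj σ1).2]
        · intro τ _ hτ
          rw [hpir τ]
          cases hb : τ i with
          | true => rw [cond_true, zero_mul]
          | false => rw [cond_false, hrorth τ σ1 hτ]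
        · intro h'; exact absurd (Finset.mem_univ σ1) h'
      rw [h, zero_mul] at hkey
      exact hrσ1 hkey.symm
    · intro h
      have h1 : (1 - q) * (P σ1 - r σ1) = P σ1 - r σ1 := by
        rw [sub_mul, one_mul, hqsub, sub_zero]
      have h2 : p i * (P σ1 - r σ1) = P σ1 - r σ1 := by
        rw [mul_sub, habs σ1 i, hσ1i, cond_false, hpir σ1, hσ1i, cond_false]
      have h3 : (p i * (1 - q)) * (P σ1 - r σ1) = P σ1 - r σ1 := by
        rw [mul_assoc, h1, h2]
      rw [h, zero_mul] at h3
      exact (sub_ne_zero.mpr fun hh => (hrne σ1 hPσ1).2 hh.symm) h3.symm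
end

section
/- Let B be an atomless Boolean algebra. Then for every finite list b_0,…,b_{n−1} of elements of B with 0 < b_i < 1, there exists c ∈ B with 0 < c < 1 such that for all i < n: b_i ∧ c ≠ 0 and b_i ∧ cᶜ ≠ 0. -/
/-- Core splitting lemma: given finitely many nonzero elements `w i` and a nonzero `b`
in an atomless Boolean algebra, we can shrink each `w i` to a nonzero `w' i ≤ w i` and
find a nonzero `e ≤ b` disjoint from every `w' i`. -/
theorem stmt11_core {B : Type*} [BooleanAlgebra B]
    (hatomless : ∀ b : B, ⊥ < b → ∃ c : B, ⊥ < c ∧ c < b) :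
    ∀ (k : ℕ) (w : Fin k → B), (∀ i, ⊥ < w i) → ∀ b : B, ⊥ < b →
      ∃ (w' : Fin k → B) (e : B),
        (∀ i, ⊥ < w' i ∧ w' i ≤ w i) ∧ ⊥ < e ∧ e ≤ b ∧ ∀ i, e ⊓ w' i = ⊥ := by
  intro k
  induction k with
  | zero =>
    intro w _ b hb
    exact ⟨w, b, fun i => i.elim0, hb, le_rfl, fun i => i.elim0⟩
  | succ k ih =>
    intro w hw b hb
    by_cases h : b ⊓ (w 0)ᶜ = ⊥
    · have hbw : b ≤ w 0 := sdiff_eq_bot_iff.mp (by rwa [sdiff_eq])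
      obtain ⟨d, hd1, hd2⟩ := hatomless b hb
      obtain ⟨w', e, hw', he1, he2, he3⟩ :=
        ih (fun i => w i.succ) (fun i => hw i.succ) d hd1
      refine ⟨Fin.cons (w 0 ⊓ eᶜ) w', e, ?_, he1, he2.trans hd2.le, ?_⟩
      · intro i
        refine Fin.cases ?_ ?_ i
        · constructor
          · rw [bot_lt_iff_ne_bot]
            intro hz
            have h1 : w 0 ≤ e := sdiff_eq_bot_iff.mp (by rwa [sdiff_eq])
            exact absurd (le_antisymm (hbw.trans (h1.trans he2)) hd2.le)
              (ne_of_lt hd2).symm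
          · simp
        · intro j
          simpa using hw' j
      · intro i
        refine Fin.cases ?_ ?_ i
        · simp only [Fin.cons_zero]
          exact le_bot_iff.mp ((inf_le_inf_left _ inf_le_right).trans (by simp))
        · intro j; simpa using he3 j
    · obtain ⟨w', e, hw', he1, he2, he3⟩ :=
        ih (fun i => w i.succ) (fun i => hw i.succ) (b ⊓ (w 0)ᶜ) (bot_lt_iff_ne_bot.mpr h)
      refine ⟨Fin.cons (w 0) w', e, ?_, he1, he2.trans inf_le_left, ?_⟩
      · intro i
        refine Fin.cases ?_ ?_ i
        · exact ⟨hw 0, by simp⟩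
        · intro j; simpa using hw' j
      · intro i
        refine Fin.cases ?_ ?_ i
        · have he : e ≤ (w 0)ᶜ := he2.trans inf_le_right
          simp only [Fin.cons_zero]
          exact le_bot_iff.mp ((inf_le_inf_right _ he).trans (by simp))
        · intro j; simpa using he3 j

/-- Build witnesses `p i, q i ≤ b i`, all nonzero, with every `p i` disjoint from every
`q j`. -/
theorem stmt11_aux {B : Type*} [BooleanAlgebra B]
    (hatomless : ∀ b : B, ⊥ < b → ∃ c : B, ⊥ < c ∧ c < b) :
    ∀ (k : ℕ) (b : Fin k → B), (∀ i, ⊥ < b i) →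
      ∃ p q : Fin k → B,
        (∀ i, ⊥ < p i ∧ p i ≤ b i ∧ ⊥ < q i ∧ q i ≤ b i) ∧
        ∀ i j, p i ⊓ q j = ⊥ := by
  intro k
  induction k with
  | zero => exact fun b _ => ⟨b, b, fun i => i.elim0, fun i => i.elim0⟩
  | succ k ih =>
    intro b hb
    obtain ⟨p, q, hpq, hdisj⟩ := ih (fun i => b i.castSucc) (fun i => hb _)
    have hlast : ⊥ < b (Fin.last k) := hb _
    obtain ⟨q', e, hq', he1, he2, he3⟩ :=
      stmt11_core hatomless k q (fun i => (hpq i).2.2.1) _ hlast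
    obtain ⟨P, f, hP, hf1, hf2, hf3⟩ :=
      stmt11_core hatomless (k + 1) (Fin.cons e p)
        (fun i => Fin.cases he1 (fun j => (hpq j).1) i) _ hlast
    have hP0 : P 0 ≤ e := by simpa using (hP 0).2
    have hPs : ∀ j : Fin k, P j.succ ≤ p j := fun j => by simpa using (hP j.succ).2
    refine ⟨Fin.snoc (fun j => P j.succ) (P 0), Fin.snoc q' f, ?_, ?_⟩
    · intro i
      refine Fin.lastCases ?_ ?_ i
      · simp only [Fin.snoc_last]
        exact ⟨(hP 0).1, hP0.trans he2, hf1, hf2⟩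
      · intro j
        simp only [Fin.snoc_castSucc]
        exact ⟨(hP j.succ).1, (hPs j).trans (hpq j).2.1, (hq' j).1,
          (hq' j).2.trans (hpq j).2.2.2⟩
    · intro i j
      refine Fin.lastCases ?_ ?_ i
      · refine Fin.lastCases ?_ ?_ j
        · simp only [Fin.snoc_last]
          rw [inf_comm]; exact hf3 0
        · intro j'
          simp only [Fin.snoc_last, Fin.snoc_castSucc]
          exact le_bot_iff.mp ((inf_le_inf_right _ hP0).trans (he3 j').le)
      · intro i'
        refine Fin.lastCases ?_ ?_ j
        · simp only [Fin.snoc_last, Fin.snoc_castSucc]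
          rw [inf_comm]; exact hf3 i'.succ
        · intro j'
          simp only [Fin.snoc_castSucc]
          exact le_bot_iff.mp
            ((inf_le_inf (hPs i') (hq' j').2).trans (hdisj i' j').le)

/-- In an atomless Boolean algebra, every finite list of elements
strictly between `⊥` and `⊤` can be simultaneously split by a single element `c` with
`⊥ < c < ⊤`. -/
theorem stmt11 {B : Type*} [BooleanAlgebra B] [Nontrivial B]
    (hatomless : ∀ b : B, ⊥ < b → ∃ c : B, ⊥ < c ∧ c < b)
    (n : ℕ) (b : Fin n → B) (hb : ∀ i, ⊥ < b i ∧ b i < ⊤) :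
    ∃ c : B, ⊥ < c ∧ c < ⊤ ∧ ∀ i, b i ⊓ c ≠ ⊥ ∧ b i ⊓ cᶜ ≠ ⊥ := by
  rcases n with _ | m
  · obtain ⟨c, hc1, hc2⟩ := hatomless ⊤ (bot_lt_iff_ne_bot.mpr top_ne_bot)
    exact ⟨c, hc1, hc2, fun i => i.elim0⟩
  obtain ⟨p, q, hpq, hdisj⟩ := stmt11_aux hatomless (m + 1) b (fun i => (hb i).1)
  set c : B := Finset.univ.sup p with hc
  have hpc : ∀ i, p i ≤ c := fun i => Finset.le_sup (Finset.mem_univ i)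
  have hqc : ∀ i, q i ≤ cᶜ := by
    intro i
    rw [le_compl_iff_disjoint_right, hc, Finset.disjoint_sup_right]
    intro j _
    exact disjoint_iff.mpr (by rw [inf_comm]; exact hdisj j i)
  refine ⟨c, lt_of_lt_of_le (hpq 0).1 (hpc 0), ?_, ?_⟩
  · rw [lt_top_iff_ne_top]
    intro hct
    have : q 0 ≤ ⊥ := by simpa [hct] using hqc 0
    exact absurd (le_antisymm this bot_le) (ne_of_lt (hpq 0).2.2.1).symm
  · intro i
    constructor
    · intro hz
      have : p i ≤ ⊥ := hz ▸ le_inf (hpq i).2.1 (hpc i)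
      exact absurd (le_antisymm this bot_le) (ne_of_lt (hpq i).1).symm
    · intro hz
      have : q i ≤ ⊥ := hz ▸ le_inf (hpq i).2.2.2 (hqc i)
      exact absurd (le_antisymm this bot_le) (ne_of_lt (hpq i).2.2.1).symm
end
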